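/- Let k be a commutative ring and H a bialgebra over k with comultiplication Δ (written Δ(b) = Σ b⁽¹⁾ ⊗ b⁽²⁾). Let R = Σ R¹ ⊗ R² ∈ H ⊗ H be invertible and satisfy Δᵒᵖ(b) = R·Δ(b)·R⁻¹ for all b ∈ H (where Δᵒᵖ = σ ∘ Δ with σ the flip), (Δ ⊗ id)(R) = R₁₃R₂₃, and (id ⊗ Δ)(R) = R₁₃R₁₂. Let A be an H-module with a k-bilinear multiplication μ which is invariant with respect to the opposite comultiplication: b·μ(x,y) = Σ μ(b⁽²⁾·x, b⁽¹⁾·y) for all b ∈ H, x, y ∈ A. Then the multiplication μ′(x,y) = Σ μ(R¹·x, R²·y) is H-invariant with respect to Δ: b·μ′(x,y) = Σ μ′(b⁽¹⁾·x, b⁽²⁾·y) for all b ∈ H, x, y ∈ A. -/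

import Mathlib

open scoped TensorProduct

namespace Stmt8

variable (k : Type) [CommRing k]
variable (H : Type) [Ring H] [Bialgebra k H]
variable (A : Type) [AddCommGroup A] [Module k A]

/-- The componentwise action of `H ⊗ H` on `A ⊗ A` induced by an `H`-module
structure `ρ : H → End(A)`. -/
noncomputable def act2 (ρ : H →ₐ[k] Module.End k A) :
    H ⊗[k] H →ₗ[k] (A ⊗[k] A →ₗ[k] A ⊗[k] A) :=
  TensorProduct.homTensorHomMap (RingHom.id k) A A A A ∘ₗ
    TensorProduct.map ρ.toLinearMap ρ.toLinearMap

/-- `R₁₂ = Σ R¹ ⊗ R² ⊗ 1` in `H⊗³`. -/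
noncomputable def ext12 : H ⊗[k] H →ₗ[k] H ⊗[k] (H ⊗[k] H) :=
  TensorProduct.map LinearMap.id ((TensorProduct.mk k H H).flip 1)

/-- `R₁₃ = Σ R¹ ⊗ 1 ⊗ R²` in `H⊗³`. -/
noncomputable def ext13 : H ⊗[k] H →ₗ[k] H ⊗[k] (H ⊗[k] H) :=
  TensorProduct.map LinearMap.id (TensorProduct.mk k H H 1)

/-- `R₂₃ = Σ 1 ⊗ R¹ ⊗ R²` in `H⊗³`. -/
noncomputable def ext23 : H ⊗[k] H →ₗ[k] H ⊗[k] (H ⊗[k] H) :=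
  TensorProduct.mk k H (H ⊗[k] H) 1

/-- `Δ ⊗ id : H⊗² → H⊗³`. -/
noncomputable def comul12 : H ⊗[k] H →ₗ[k] H ⊗[k] (H ⊗[k] H) :=
  (TensorProduct.assoc k H H H).toLinearMap ∘ₗ
    TensorProduct.map Coalgebra.comul LinearMap.id

/-- `id ⊗ Δ : H⊗² → H⊗³`. -/
noncomputable def comul23 : H ⊗[k] H →ₗ[k] H ⊗[k] (H ⊗[k] H) :=
  TensorProduct.map LinearMap.id Coalgebra.comul

/-!
The action of `H ⊗ H` on `A ⊗ A` is multiplicative, so twisting by `R` turns invariance under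
`x ∈ H ⊗ H` into invariance under any `y` with `x R = R y`. Quasi-cocommutativity gives
`Δᵒᵖ(b) R = R Δ(b)`.
-/

theorem act2_apply_eq_endTensorEndAlgHom (ρ : H →ₐ[k] Module.End k A) (x : H ⊗[k] H) :
    act2 k H A ρ x =
      Module.endTensorEndAlgHom (R := k) (S := k) (A := k) (Algebra.TensorProduct.map ρ ρ x) := by
  induction x using TensorProduct.induction_on with
  | zero => simp
  | tmul a b => rfl
  | add x y hx hy => simp only [map_add, hx, hy]

theorem act2_mul (ρ : H →ₐ[k] Module.End k A) (x y : H ⊗[k] H) :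
    act2 k H A ρ (x * y) = act2 k H A ρ x ∘ₗ act2 k H A ρ y := by
  simp only [act2_apply_eq_endTensorEndAlgHom, map_mul, Module.End.mul_eq_comp]

theorem comp_act2_intertwines_of_mul_eq_mul (ρ : H →ₐ[k] Module.End k A)
    (f : Module.End k A) (m : A ⊗[k] A →ₗ[k] A) {x y R : H ⊗[k] H}
    (hm : f ∘ₗ m = m ∘ₗ act2 k H A ρ x) (hxy : x * R = R * y) :
    f ∘ₗ (m ∘ₗ act2 k H A ρ R) = (m ∘ₗ act2 k H A ρ R) ∘ₗ act2 k H A ρ y := by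
  rw [← LinearMap.comp_assoc, hm, LinearMap.comp_assoc, ← act2_mul, hxy, act2_mul,
    LinearMap.comp_assoc]

theorem twist_by_R_matrix_of_cop_invariant
    (R Rinv : H ⊗[k] H) (hR' : Rinv * R = 1)
    (hRΔ : ∀ b : H,
      (TensorProduct.comm k H H) (Coalgebra.comul (R := k) b) =
        R * Coalgebra.comul b * Rinv)
    (ρ : H →ₐ[k] Module.End k A)
    (μ : A →ₗ[k] A →ₗ[k] A)
    (hinv : ∀ b : H,
      ρ b ∘ₗ TensorProduct.lift μ =
        TensorProduct.lift μ ∘ₗ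
          act2 k H A ρ ((TensorProduct.comm k H H) (Coalgebra.comul b))) :
    ∀ b : H,
      ρ b ∘ₗ (TensorProduct.lift μ ∘ₗ act2 k H A ρ R) =
        (TensorProduct.lift μ ∘ₗ act2 k H A ρ R) ∘ₗ
          act2 k H A ρ (Coalgebra.comul b) := by
  intro b
  have hcomm : TensorProduct.comm k H H (Coalgebra.comul b) * R = R * Coalgebra.comul b := by
    rw [hRΔ b, mul_assoc, mul_assoc, hR', mul_one]
  exact comp_act2_intertwines_of_mul_eq_mul k H A ρ (ρ b) _ (hinv b) hcomm

end Stmt8
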